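/- Let g(y) = (1/θ)·Σⱼ log σ(θuⱼ(−cⱼ − (Aᵀy)ⱼ)) + bᵀy be the dual function and f the entropy-regularized primal objective. If y* satisfies the first-order condition A·x(y*) = b with x(y*)ⱼ = uⱼ·σ(θuⱼ(cⱼ + (Aᵀy*)ⱼ)), then x(y*) is the unique optimal solution of the primal problem min{f(x) : Ax = b, 0 ≤ x ≤ u} and strong duality holds: f(x(y*)) = g(y*). -/

import Mathlib

open Matrix
noncomputable def sigmoid (t : ℝ) : ℝ := 1 / (1 + Real.exp (-t))

lemma sigmoid_pos (t : ℝ) : 0 < sigmoid t := by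
  unfold sigmoid; positivity

lemma sigmoid_lt_one (t : ℝ) : sigmoid t < 1 := by
  unfold sigmoid
  rw [div_lt_one (by positivity)]
  linarith [Real.exp_pos (-t)]

lemma one_sub_sigmoid (t : ℝ) : 1 - sigmoid t = sigmoid (-t) := by
  unfold sigmoid
  rw [neg_neg]
  have h1 : (0:ℝ) < 1 + Real.exp (-t) := by positivity
  have h2 : (0:ℝ) < 1 + Real.exp t := by positivity
  have h3 : Real.exp t * Real.exp (-t) = 1 := by
    rw [← Real.exp_add]; simp
  field_simp
  nlinarith [h3]

lemma sigmoid_eq_exp_mul (t : ℝ) : sigmoid t = Real.exp t * sigmoid (-t) := by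
  unfold sigmoid
  rw [neg_neg]
  have h1 : (0:ℝ) < 1 + Real.exp (-t) := by positivity
  have h2 : (0:ℝ) < 1 + Real.exp t := by positivity
  have h3 : Real.exp t * Real.exp (-t) = 1 := by
    rw [← Real.exp_add]; simp
  field_simp
  nlinarith [h3]

lemma log_sigmoid_sub (t : ℝ) :
    Real.log (sigmoid t) - Real.log (sigmoid (-t)) = t := by
  rw [sigmoid_eq_exp_mul t, Real.log_mul (Real.exp_ne_zero t) (ne_of_gt (sigmoid_pos (-t))),
    Real.log_exp]
  ring

lemma kl_pos {p q : ℝ} (hp0 : 0 < p) (hp1 : p < 1) (hq0 : 0 ≤ q) (hq1 : q ≤ 1)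
    (hne : q ≠ p) :
    0 < q * (Real.log q - Real.log p) + (1 - q) * (Real.log (1 - q) - Real.log (1 - p)) := by
  rcases eq_or_lt_of_le hq0 with h0 | h0
  · -- q = 0
    simp only [← h0]
    simp only [Real.log_zero, mul_zero, zero_mul, sub_zero, Real.log_one]
    have : Real.log (1 - p) < 0 := Real.log_neg (by linarith) (by linarith)
    nlinarith
  rcases eq_or_lt_of_le hq1 with h1 | h1
  · -- q = 1
    rw [h1]
    simp only [sub_self, Real.log_one, zero_mul, zero_sub, add_zero, one_mul, zero_mul]
    have : Real.log p < 0 := Real.log_neg hp0 hp1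
    nlinarith
  · -- 0 < q < 1
    have hpq : p / q ≠ 1 := by
      intro h; exact hne ((div_eq_one_iff_eq (ne_of_gt h0)).mp h).symm
    have h1' : (1 - p) / (1 - q) ≠ 1 := by
      intro h
      have := (div_eq_one_iff_eq (by linarith : (1:ℝ) - q ≠ 0)).mp h
      exact hne (by linarith)
    have key1 : Real.log (p / q) < p / q - 1 :=
      Real.log_lt_sub_one_of_pos (by positivity) hpq
    have key2 : Real.log ((1 - p) / (1 - q)) < (1 - p) / (1 - q) - 1 :=
      Real.log_lt_sub_one_of_pos (div_pos (by linarith) (by linarith)) h1'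
    rw [Real.log_div (ne_of_gt hp0) (ne_of_gt h0)] at key1
    rw [Real.log_div (by linarith) (by linarith : (1:ℝ) - q ≠ 0)] at key2
    have e1 : q * (p / q - 1) = p - q := by field_simp
    have hq1' : (1:ℝ) - q ≠ 0 := by linarith
    have e2 : (1 - q) * ((1 - p) / (1 - q) - 1) = q - p := by
      field_simp
      ring
    have k1 : q * (Real.log p - Real.log q) < p - q := by
      calc q * (Real.log p - Real.log q) < q * (p / q - 1) := by
            apply mul_lt_mul_of_pos_left key1 h0
        _ = p - q := e1
    have k2 : (1 - q) * (Real.log (1 - p) - Real.log (1 - q)) < q - p := by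
      calc (1 - q) * (Real.log (1 - p) - Real.log (1 - q))
          < (1 - q) * ((1 - p) / (1 - q) - 1) := by
            apply mul_lt_mul_of_pos_left key2 (by linarith)
        _ = q - p := e2
    nlinarith

/-- entropy convexity lower bound, strict version -/
lemma entropy_lb_lt {p q : ℝ} (hp0 : 0 < p) (hp1 : p < 1) (hq0 : 0 ≤ q) (hq1 : q ≤ 1)
    (hne : q ≠ p) :
    p * Real.log p + (1 - p) * Real.log (1 - p) + (Real.log p - Real.log (1 - p)) * (q - p)
      < q * Real.log q + (1 - q) * Real.log (1 - q) := by
  have h := kl_pos hp0 hp1 hq0 hq1 hne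
  nlinarith [h]

lemma entropy_lb_le {p q : ℝ} (hp0 : 0 < p) (hp1 : p < 1) (hq0 : 0 ≤ q) (hq1 : q ≤ 1) :
    p * Real.log p + (1 - p) * Real.log (1 - p) + (Real.log p - Real.log (1 - p)) * (q - p)
      ≤ q * Real.log q + (1 - q) * Real.log (1 - q) := by
  rcases eq_or_ne q p with h | h
  · subst h; ring_nf; rfl
  · exact le_of_lt (entropy_lb_lt hp0 hp1 hq0 hq1 h)

theorem strong_duality_entropy_lp (m n : ℕ) (A : Matrix (Fin m) (Fin n) ℝ)
    (b : Fin m → ℝ) (c u : Fin n → ℝ) (θ : ℝ) (hθ : 0 < θ) (hu : ∀ j, 0 < u j)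
    (f : (Fin n → ℝ) → ℝ)
    (hf : f = fun x => -(∑ j, c j * x j) + (1/θ) * ∑ j,
      ((x j / u j) * Real.log (x j / u j)
        + (1 - x j / u j) * Real.log (1 - x j / u j)))
    (g : (Fin m → ℝ) → ℝ)
    (hg : g = fun y => (1/θ) * ∑ j,
        Real.log (sigmoid (θ * u j * (-c j - A.transpose.mulVec y j))) + b ⬝ᵥ y)
    (ystar : Fin m → ℝ) (xstar : Fin n → ℝ)
    (hxstar : xstar = fun j =>
      u j * sigmoid (θ * u j * (c j + A.transpose.mulVec ystar j)))
    (hfoc : A.mulVec xstar = b) :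
    (0 ≤ xstar ∧ xstar ≤ u) ∧
    (∀ x : Fin n → ℝ, A.mulVec x = b → 0 ≤ x → x ≤ u → x ≠ xstar →
      f xstar < f x) ∧
    f xstar = g ystar := by
  set a : Fin n → ℝ := A.transpose.mulVec ystar with ha
  set p : Fin n → ℝ := fun j => sigmoid (θ * u j * (c j + a j)) with hp
  have hp0 : ∀ j, 0 < p j := fun j => sigmoid_pos _
  have hp1 : ∀ j, p j < 1 := fun j => sigmoid_lt_one _
  have hxs : ∀ j, xstar j = u j * p j := fun j => by rw [hxstar]
  have hs : ∀ j, Real.log (p j) - Real.log (1 - p j) = θ * u j * (c j + a j) := by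
    intro j
    rw [hp]
    simp only
    rw [one_sub_sigmoid, log_sigmoid_sub]
  have hxu' : ∀ j, xstar j / u j = p j := by
    intro j
    rw [hxs j, mul_comm, mul_div_assoc, div_self (hu j).ne', mul_one]
  have hdot : ∀ z : Fin n → ℝ, A.mulVec z = b → ∑ j, a j * z j = b ⬝ᵥ ystar := by
    intro z hz
    calc ∑ j, a j * z j = a ⬝ᵥ z := rfl
      _ = (Matrix.vecMul ystar A) ⬝ᵥ z := by rw [ha, Matrix.mulVec_transpose]
      _ = ystar ⬝ᵥ (A.mulVec z) := (Matrix.dotProduct_mulVec _ _ _).symm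
      _ = ystar ⬝ᵥ b := by rw [hz]
      _ = b ⬝ᵥ ystar := dotProduct_comm _ _
  -- f xstar in terms of p
  have hfx : f xstar = -(∑ j, c j * xstar j) + (1/θ) * ∑ j,
      (p j * Real.log (p j) + (1 - p j) * Real.log (1 - p j)) := by
    rw [hf]
    simp only
    congr 1
    refine congrArg _ (Finset.sum_congr rfl fun j _ => ?_)
    rw [hxu' j]
  refine ⟨⟨fun j => ?_, fun j => ?_⟩, fun x hAx hx0 hxu hne => ?_, ?_⟩
  · rw [hxs j]
    exact le_of_lt (mul_pos (hu j) (hp0 j))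
  · rw [hxs j]
    exact mul_le_of_le_one_right (hu j).le (hp1 j).le
  · -- strict optimality
    have hq0 : ∀ j, 0 ≤ x j / u j := fun j => div_nonneg (hx0 j) (hu j).le
    have hq1 : ∀ j, x j / u j ≤ 1 := fun j => (div_le_one (hu j)).mpr (hxu j)
    obtain ⟨j0, hj0⟩ : ∃ j, x j ≠ xstar j := by
      by_contra h
      push_neg at h
      exact hne (funext h)
    have hqne : x j0 / u j0 ≠ p j0 := by
      intro h
      apply hj0
      rw [hxs j0, ← h, mul_comm, div_mul_cancel₀ _ (hu j0).ne']
    have hsumlt : ∑ j, (p j * Real.log (p j) + (1 - p j) * Real.log (1 - p j)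
          + θ * u j * (c j + a j) * (x j / u j - p j))
        < ∑ j, ((x j / u j) * Real.log (x j / u j)
          + (1 - x j / u j) * Real.log (1 - x j / u j)) := by
      apply Finset.sum_lt_sum
      · intro j _
        rw [← hs j]
        exact entropy_lb_le (hp0 j) (hp1 j) (hq0 j) (hq1 j)
      · refine ⟨j0, Finset.mem_univ _, ?_⟩
        rw [← hs j0]
        exact entropy_lb_lt (hp0 j0) (hp1 j0) (hq0 j0) (hq1 j0) hqne
    have hlb_eq : ∑ j, (p j * Real.log (p j) + (1 - p j) * Real.log (1 - p j)
          + θ * u j * (c j + a j) * (x j / u j - p j))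
        = ∑ j, (p j * Real.log (p j) + (1 - p j) * Real.log (1 - p j))
          + θ * ∑ j, ((c j + a j) * (x j - xstar j)) := by
      rw [Finset.mul_sum, ← Finset.sum_add_distrib]
      refine Finset.sum_congr rfl fun j _ => ?_
      rw [hxs j]
      have hj := (hu j).ne'
      field_simp
    have hlin : ∑ j, ((c j + a j) * (x j - xstar j))
        = ∑ j, c j * x j - ∑ j, c j * xstar j := by
      have e1 : ∑ j, ((c j + a j) * (x j - xstar j))
          = (∑ j, c j * x j - ∑ j, c j * xstar j)
            + (∑ j, a j * x j - ∑ j, a j * xstar j) := by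
        rw [← Finset.sum_sub_distrib, ← Finset.sum_sub_distrib, ← Finset.sum_add_distrib]
        exact Finset.sum_congr rfl fun j _ => by ring
      rw [e1, hdot x hAx, hdot xstar hfoc]
      ring
    rw [hlin] at hlb_eq
    rw [hlb_eq] at hsumlt
    have h2 := mul_lt_mul_of_pos_left hsumlt (show (0:ℝ) < 1/θ by positivity)
    rw [hfx, hf]
    simp only
    have hθ' : θ ≠ 0 := hθ.ne'
    have e3 : (1/θ) * (θ * (∑ j, c j * x j - ∑ j, c j * xstar j))
        = ∑ j, c j * x j - ∑ j, c j * xstar j := by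
      field_simp
    rw [mul_add, e3] at h2
    linarith
  · -- strong duality
    have hEp : ∀ j, p j * Real.log (p j) + (1 - p j) * Real.log (1 - p j)
        = θ * (c j + a j) * xstar j
          + Real.log (sigmoid (θ * u j * (-c j - a j))) := by
      intro j
      have h1 := hs j
      have h3 : θ * u j * (-c j - a j) = -(θ * u j * (c j + a j)) := by ring
      have h2 : sigmoid (θ * u j * (-c j - a j)) = 1 - p j := by
        rw [h3, hp, ← one_sub_sigmoid]
      rw [h2, hxs j]
      linear_combination p j * h1
    rw [hfx, hg]
    simp only
    rw [Finset.sum_congr rfl (fun j _ => hEp j), Finset.sum_add_distrib, mul_add]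
    have e4 : (1/θ) * ∑ j, θ * (c j + a j) * xstar j
        = ∑ j, (c j + a j) * xstar j := by
      rw [Finset.mul_sum]
      refine Finset.sum_congr rfl fun j _ => ?_
      field_simp
    rw [e4]
    have e5 : ∑ j, (c j + a j) * xstar j
        = ∑ j, c j * xstar j + ∑ j, a j * xstar j := by
      rw [← Finset.sum_add_distrib]
      exact Finset.sum_congr rfl fun j _ => by ring
    rw [e5, hdot xstar hfoc]
    ring
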